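/- arXiv:2005.05220 — 3 statements merged into one kernel-verified Lean document; each statement's English description precedes it below -/
import Mathlib

section
/- Let A and B be real n×n matrices satisfying A * A = -B, B * B = B, A * B = A and B * A = A. Then for every real number t, exp(t • A) = 1 - B + (cos t) • B + (sin t) • A. -/
/-!
Since `B` and `1 - B` are complementary idempotents and `A` lies in the corner `B 𝔸 B` with
`A * A = -B`, the map `(z, r) ↦ r • (1 - B) + z.re • B + z.im • A` is a continuous ring
homomorphism `ℂ × ℝ → 𝔸` sending `(t * I, 0)` to `t • A`. It commutes with `exp`, and
`exp (t * I, 0) = (cos t + sin t * I, 1)`.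
-/

open NormedSpace

section EulerHom

variable {𝔸 : Type*} [NormedRing 𝔸] [NormedAlgebra ℝ 𝔸] {A B : 𝔸}

def complexProdRingHom (hAA : A * A = -B) (hBB : B * B = B) (hAB : A * B = A)
    (hBA : B * A = A) : ℂ × ℝ →+* 𝔸 where
  toFun p := p.2 • (1 - B) + p.1.re • B + p.1.im • A
  map_one' := by simp
  map_zero' := by simp
  map_add' p q := by
    simp only [Prod.fst_add, Prod.snd_add, Complex.add_re, Complex.add_im]
    module
  map_mul' p q := by
    simp only [Prod.fst_mul, Prod.snd_mul, Complex.mul_re, Complex.mul_im, mul_add, add_mul,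
      smul_mul_assoc, mul_smul_comm, smul_smul, sub_mul, mul_sub, one_mul, mul_one, hAA, hBB,
      hAB, hBA, smul_neg, smul_sub, smul_add, sub_smul, add_smul]
    module

variable (hAA : A * A = -B) (hBB : B * B = B) (hAB : A * B = A) (hBA : B * A = A)
include hAA hBB hAB hBA

theorem complexProdRingHom_apply (p : ℂ × ℝ) :
    complexProdRingHom hAA hBB hAB hBA p = p.2 • (1 - B) + p.1.re • B + p.1.im • A :=
  rfl

theorem continuous_complexProdRingHom : Continuous (complexProdRingHom hAA hBB hAB hBA) := by
  show Continuous fun p : ℂ × ℝ => p.2 • (1 - B) + p.1.re • B + p.1.im • A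
  fun_prop

theorem exp_smul_eq_of_mul_self_eq_neg_idempotent (t : ℝ) :
    exp (t • A) = 1 - B + Real.cos t • B + Real.sin t • A := by
  let : Algebra ℚ 𝔸 := Algebra.compHom 𝔸 (algebraMap ℚ ℝ)
  set f := complexProdRingHom hAA hBB hAB hBA
  have hf : f ((t : ℂ) * Complex.I, 0) = t • A := by simp [f, complexProdRingHom_apply]
  have hexp : exp (((t : ℂ) * Complex.I, 0) : ℂ × ℝ) = (Complex.exp (t * Complex.I), 1) := by
    ext <;> simp [Complex.exp_eq_exp_ℂ]
  rw [← hf, ← map_exp f (continuous_complexProdRingHom hAA hBB hAB hBA), hexp]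
  simp [f, complexProdRingHom_apply, Complex.exp_mul_I, Complex.cos_ofReal_re,
    Complex.sin_ofReal_re]

end EulerHom

/-- Euler-type formula for the matrix exponential: if `A * A = -B`, `B * B = B` and
`A * B = B * A = A`, then `exp (t • A) = 1 - B + cos t • B + sin t • A`. -/
theorem exp_smul_eulerLike (n : ℕ) (A B : Matrix (Fin n) (Fin n) ℝ)
    (hAA : A * A = -B) (hBB : B * B = B) (hAB : A * B = A) (hBA : B * A = A) :
    ∀ t : ℝ, NormedSpace.exp (t • A) = 1 - B + Real.cos t • B + Real.sin t • A := by
  let : NormedRing (Matrix (Fin n) (Fin n) ℝ) := Matrix.linftyOpNormedRing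
  let : NormedAlgebra ℝ (Matrix (Fin n) (Fin n) ℝ) := Matrix.linftyOpNormedAlgebra
  exact exp_smul_eq_of_mul_self_eq_neg_idempotent hAA hBB hAB hBA
end

section
/- Let θ_haar be the real 4×4 matrix (π/4) · [[0,0,-1,-1],[0,0,1,1],[0,0,0,0],[0,0,0,0]]. Then exp(θ_haar - θ_haarᵀ) = (1/2) · [[1,1,-1,-1],[1,1,1,1],[1,-1,1,-1],[1,-1,-1,1]]. -/
/-!
With `K = (θ_haar - θ_haarᵀ) / (π/2)` one checks `K³ = -K`. For such `K` Rodrigues' formula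
`exp (t • K) = 1 + sin t • K + (1 - cos t) • K²` holds, because both sides solve `X' = K X`,
`X 0 = 1`; equivalently `exp (-t • K) * (1 + sin t • K + (1 - cos t) • K²)` has zero
derivative. At `t = π/2` the right-hand side is `1 + K + K²`, which is the Haar matrix.
-/

open Matrix NormedSpace

section Rodrigues

variable {𝔸 : Type*} [NormedRing 𝔸] [NormedAlgebra ℝ 𝔸]

theorem hasDerivAt_rodrigues {K : 𝔸} (hK : K ^ 3 = -K) (t : ℝ) :
    HasDerivAt (fun s : ℝ => 1 + Real.sin s • K + (1 - Real.cos s) • K ^ 2)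
      (K * (1 + Real.sin t • K + (1 - Real.cos t) • K ^ 2)) t := by
  refine ((((Real.hasDerivAt_sin t).smul_const K).const_add 1).add
    (((Real.hasDerivAt_cos t).const_sub 1).smul_const (K ^ 2))).congr_deriv ?_
  rw [mul_add, mul_add, mul_one, mul_smul_comm, mul_smul_comm, ← pow_succ', ← pow_two, hK]
  simp only [neg_neg, smul_neg, sub_smul, one_smul]
  abel

theorem exp_smul_of_pow_three_eq_neg [CompleteSpace 𝔸] {K : 𝔸} (hK : K ^ 3 = -K) (t : ℝ) :
    exp (t • K) = 1 + Real.sin t • K + (1 - Real.cos t) • K ^ 2 := by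
  set f : ℝ → 𝔸 := fun s => 1 + Real.sin s • K + (1 - Real.cos s) • K ^ 2
  have hderiv : ∀ s, HasDerivAt (fun s => exp ((-s) • K) * f s) 0 s := by
    intro s
    have hexp : HasDerivAt (fun s : ℝ => exp ((-s) • K)) (-(exp ((-s) • K) * K)) s :=
      ((hasDerivAt_exp_smul_const K (-s)).scomp s (hasDerivAt_neg s)).congr_deriv
        (by rw [neg_one_smul])
    refine (hexp.mul (hasDerivAt_rodrigues hK s)).congr_deriv ?_
    rw [neg_mul, mul_assoc, neg_add_cancel]
  have hconst : exp ((-t) • K) * f t = 1 := by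
    simpa [f] using is_const_of_deriv_eq_zero (fun s => (hderiv s).differentiableAt)
      (fun s => (hderiv s).deriv) t 0
  let : NormedAlgebra ℚ 𝔸 := NormedAlgebra.restrictScalars ℚ ℝ 𝔸
  have hcomm : Commute (t • K) ((-t) • K) := ((Commute.refl K).smul_left t).smul_right (-t)
  calc exp (t • K) = exp (t • K) * (exp ((-t) • K) * f t) := by rw [hconst, mul_one]
    _ = f t := by
      rw [← mul_assoc, ← exp_add_of_commute hcomm, ← add_smul, add_neg_cancel, zero_smul,
        exp_zero, one_mul]

end Rodrigues

noncomputable def haarGenerator : Matrix (Fin 4) (Fin 4) ℝ :=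
  !![0, 0, -1 / 2, -1 / 2; 0, 0, 1 / 2, 1 / 2; 1 / 2, -1 / 2, 0, 0; 1 / 2, -1 / 2, 0, 0]

theorem haarGenerator_pow_three : haarGenerator ^ 3 = -haarGenerator := by
  ext i j
  fin_cases i <;> fin_cases j <;>
    simp [haarGenerator, pow_succ, Matrix.mul_apply, Fin.sum_univ_four] <;> norm_num

theorem one_add_haarGenerator_add_sq : 1 + haarGenerator + haarGenerator ^ 2
    = (1 / 2 : ℝ) • !![(1 : ℝ), 1, -1, -1; 1, 1, 1, 1; 1, -1, 1, -1; 1, -1, -1, 1] := by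
  ext i j
  fin_cases i <;> fin_cases j <;> simp [haarGenerator, sq] <;> norm_num

/-- The 2D Haar transform matrix is the exponential of the skew-symmetric part of
`θ_haar = (π/4) · [[0,0,-1,-1],[0,0,1,1],[0,0,0,0],[0,0,0,0]]`. -/
theorem exp_skew_theta_haar :
    exp ((Real.pi / 4) • !![(0 : ℝ), 0, -1, -1; 0, 0, 1, 1; 0, 0, 0, 0; 0, 0, 0, 0]
        - ((Real.pi / 4) • !![(0 : ℝ), 0, -1, -1; 0, 0, 1, 1; 0, 0, 0, 0; 0, 0, 0, 0])ᵀ)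
      = (1 / 2 : ℝ) • !![(1 : ℝ), 1, -1, -1; 1, 1, 1, 1; 1, -1, 1, -1; 1, -1, -1, 1] := by
  have hskew : (Real.pi / 4) • !![(0 : ℝ), 0, -1, -1; 0, 0, 1, 1; 0, 0, 0, 0; 0, 0, 0, 0]
      - ((Real.pi / 4) • !![(0 : ℝ), 0, -1, -1; 0, 0, 1, 1; 0, 0, 0, 0; 0, 0, 0, 0])ᵀ
      = (Real.pi / 2) • haarGenerator := by
    ext i j
    fin_cases i <;> fin_cases j <;> simp [haarGenerator] <;> ring
  -- `exp` depends only on the topology, so any normed-algebra structure on matrices will do.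
  let := Matrix.linftyOpNormedRing (n := Fin 4) (α := ℝ)
  let := Matrix.linftyOpNormedAlgebra (n := Fin 4) (R := ℝ) (α := ℝ)
  rw [hskew]
  refine (exp_smul_of_pow_three_eq_neg haarGenerator_pow_three _).trans ?_
  rw [Real.sin_pi_div_two, Real.cos_pi_div_two, one_smul, sub_zero, one_smul,
    one_add_haarGenerator_add_sq]
end

section
/- Let S, H, K be real n×n matrices and let exp denote the matrix exponential on real n×n matrices. Denote by Dexp(S) : Matrix → Matrix the Fréchet derivative of exp at S (i.e. fderiv ℝ exp S). Then with respect to the Frobenius inner product ⟨X, Y⟩ = trace(Xᵀ * Y), the adjoint of Dexp(S) is Dexp(Sᵀ): for all H, K, trace((Dexp(S) H)ᵀ * K) = trace(Hᵀ * (Dexp(Sᵀ) K)). -/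
open Matrix NormedSpace

attribute [local instance] Matrix.frobeniusNormedAddCommGroup Matrix.frobeniusNormedSpace

/-!
Differentiating the exponential series term by term, `Dexp(S) H = ∑ₖ (1/k!) ∑_{i+j=k-1} Sⁱ H Sʲ`.
Cyclicity of the trace and the symmetry `i ↔ j` make `(H, B) ↦ trace (Dexp(S) H * B)` a symmetric
bilinear form, and `exp Sᵀ = (exp S)ᵀ` gives `Dexp(Sᵀ) Hᵀ = (Dexp(S) H)ᵀ`; together these turn
`trace ((Dexp(S) H)ᵀ * K)` into `trace (Hᵀ * Dexp(Sᵀ) K)`.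
-/

open scoped RightActions Nat
open Finset

section SeminormedRing

variable {𝔸 : Type*} [SeminormedRing 𝔸]

-- `‖x ^ k‖ ≤ ‖x‖ ^ k` fails at `k = 0` when `‖1‖ > 1`, as for the Frobenius norm.
theorem norm_pow_mul_le (x y : 𝔸) (k : ℕ) : ‖x ^ k * y‖ ≤ ‖x‖ ^ k * ‖y‖ := by
  induction k with
  | zero => simp
  | succ k ih =>
    calc ‖x ^ (k + 1) * y‖ = ‖x * (x ^ k * y)‖ := by rw [pow_succ', mul_assoc]
      _ ≤ ‖x‖ * (‖x‖ ^ k * ‖y‖) := (norm_mul_le _ _).trans (by gcongr)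
      _ = ‖x‖ ^ (k + 1) * ‖y‖ := by ring

theorem norm_mul_pow_le (x y : 𝔸) (k : ℕ) : ‖y * x ^ k‖ ≤ ‖y‖ * ‖x‖ ^ k := by
  induction k with
  | zero => simp
  | succ k ih =>
    calc ‖y * x ^ (k + 1)‖ = ‖y * x ^ k * x‖ := by rw [pow_succ, mul_assoc]
      _ ≤ ‖y‖ * ‖x‖ ^ k * ‖x‖ := (norm_mul_le _ _).trans (by gcongr)
      _ = ‖y‖ * ‖x‖ ^ (k + 1) := by ring

end SeminormedRing

section NormedAlgebra

variable {𝕂 𝔸 : Type*} [RCLike 𝕂] [NormedRing 𝔸] [NormedAlgebra 𝕂 𝔸]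

theorem norm_pow_smul_id_smul_pow_le (x : 𝔸) (i j : ℕ) :
    ‖x ^ i •> ContinuousLinearMap.id 𝕂 𝔸 <• x ^ j‖ ≤ ‖x‖ ^ (i + j) :=
  ContinuousLinearMap.opNorm_le_bound _ (by positivity) fun h =>
    calc ‖x ^ i * h * x ^ j‖ ≤ ‖x ^ i * h‖ * ‖x‖ ^ j := norm_mul_pow_le _ _ _
      _ ≤ ‖x‖ ^ i * ‖h‖ * ‖x‖ ^ j := by gcongr; exact norm_pow_mul_le _ _ _
      _ = ‖x‖ ^ (i + j) * ‖h‖ := by ring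

theorem norm_fderiv_pow_le (x : 𝔸) (k : ℕ) :
    ‖fderiv 𝕂 (fun y : 𝔸 => y ^ k) x‖ ≤ k * ‖x‖ ^ k.pred := by
  rw [fderiv_pow_ring']
  calc _ ≤ ∑ i ∈ range k, ‖x ^ (k.pred - i) •> ContinuousLinearMap.id 𝕂 𝔸 <• x ^ i‖ :=
        norm_sum_le _ _
    _ ≤ ∑ i ∈ range k, ‖x‖ ^ k.pred := by
        refine sum_le_sum fun i hi => ?_
        have hik : k.pred - i + i = k.pred := by
          have := mem_range.mp hi; rw [Nat.pred_eq_sub_one]; omega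
        simpa only [hik] using norm_pow_smul_id_smul_pow_le (𝕂 := 𝕂) x (k.pred - i) i
    _ = k * ‖x‖ ^ k.pred := by rw [sum_const, card_range, nsmul_eq_mul]

theorem summable_inv_factorial_mul_mul_pow_pred (r : ℝ) :
    Summable fun k : ℕ => (k ! : ℝ)⁻¹ * (k * r ^ k.pred) := by
  rw [← summable_nat_add_iff 1]
  refine (Real.summable_pow_div_factorial r).congr fun k => ?_
  rw [Nat.factorial_succ, Nat.pred_succ]
  push_cast
  field_simp

theorem hasFDerivAt_exp_eq_tsum [CompleteSpace 𝔸] (x : 𝔸) :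
    HasFDerivAt (exp : 𝔸 → 𝔸) (∑' k : ℕ, (k !⁻¹ : 𝕂) • fderiv 𝕂 (fun y : 𝔸 => y ^ k) x) x := by
  let _ : NormedSpace ℝ 𝔸 := .restrictScalars ℝ 𝕂 𝔸
  set r := ‖x‖ + 1
  have hx : x ∈ Metric.ball 0 r := mem_ball_zero_iff.mpr (lt_add_one _)
  rw [exp_eq_tsum 𝕂]
  refine hasFDerivAt_tsum_of_isPreconnected (summable_inv_factorial_mul_mul_pow_pred r)
    Metric.isOpen_ball (convex_ball 0 r).isPreconnected
    (fun k y _ => (differentiableAt_pow k).hasFDerivAt.fun_const_smul _) (fun k y hy => ?_)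
    hx (expSeries_summable' x) hx
  rw [norm_smul, norm_inv, RCLike.norm_natCast]
  gcongr
  refine (norm_fderiv_pow_le y k).trans ?_
  gcongr
  exact (mem_ball_zero_iff.mp hy).le

theorem tracial_fderiv_pow_apply_mul_comm (τ : 𝔸 →L[𝕂] 𝕂) (hτ : ∀ a b, τ (a * b) = τ (b * a))
    (x h b : 𝔸) (k : ℕ) :
    τ (fderiv 𝕂 (fun y : 𝔸 => y ^ k) x h * b) = τ (fderiv 𝕂 (fun y : 𝔸 => y ^ k) x b * h) := by
  simp only [fderiv_pow_ring', _root_.sum_apply, _root_.smul_apply, ContinuousLinearMap.id_apply,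
    smul_eq_mul, MulOpposite.smul_eq_mul_unop, MulOpposite.unop_op, sum_mul, map_sum]
  rw [← sum_range_reflect]
  refine sum_congr rfl fun i hi => ?_
  have hik : k.pred - (k - 1 - i) = i := by
    have := mem_range.mp hi; rw [Nat.pred_eq_sub_one]; omega
  rw [hik]
  simpa only [mul_assoc, Nat.pred_eq_sub_one] using hτ (x ^ i * h) (x ^ (k - 1 - i) * b)

theorem tracial_fderiv_exp_apply_mul_comm [CompleteSpace 𝔸] (τ : 𝔸 →L[𝕂] 𝕂)
    (hτ : ∀ a b, τ (a * b) = τ (b * a)) (x h b : 𝔸) :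
    τ (fderiv 𝕂 exp x h * b) = τ (fderiv 𝕂 exp x b * h) := by
  let Φ : (𝔸 →L[𝕂] 𝔸) →L[𝕂] 𝕂 :=
    τ.comp ((ContinuousLinearMap.mul 𝕂 𝔸).flip b ∘L ContinuousLinearMap.apply 𝕂 𝔸 h)
      - τ.comp ((ContinuousLinearMap.mul 𝕂 𝔸).flip h ∘L ContinuousLinearMap.apply 𝕂 𝔸 b)
  have mem_ker_Φ : ∀ L, L ∈ Φ.ker ↔ τ (L h * b) = τ (L b * h) := fun L => sub_eq_zero
  rw [← mem_ker_Φ, (hasFDerivAt_exp_eq_tsum x).fderiv]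
  exact tsum_mem Φ.isClosed_ker fun k => Submodule.smul_mem _ _
    ((mem_ker_Φ _).mpr (tracial_fderiv_pow_apply_mul_comm τ hτ x h b k))

end NormedAlgebra

section Matrix

attribute [local instance] Matrix.frobeniusNormedRing Matrix.frobeniusNormedAlgebra

variable {m 𝕂 : Type*} [Fintype m] [DecidableEq m] [RCLike 𝕂]

theorem fderiv_exp_transpose_apply (S H : Matrix m m 𝕂) :
    fderiv 𝕂 exp Sᵀ Hᵀ = (fderiv 𝕂 exp S H)ᵀ := by
  have hexp (X : Matrix m m 𝕂) : HasFDerivAt exp (fderiv 𝕂 exp X) X :=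
    (hasFDerivAt_exp_eq_tsum X).differentiableAt.hasFDerivAt
  let T : Matrix m m 𝕂 →L[𝕂] Matrix m m 𝕂 :=
    LinearMap.toContinuousLinearMap (transposeLinearEquiv m m 𝕂 𝕂).toLinearMap
  have h₁ : HasFDerivAt (fun X : Matrix m m 𝕂 => exp Xᵀ) ((fderiv 𝕂 exp Sᵀ).comp T) S :=
    (hexp Sᵀ).comp S T.hasFDerivAt
  have h₂ : HasFDerivAt (fun X : Matrix m m 𝕂 => exp Xᵀ) (T.comp (fderiv 𝕂 exp S)) S := by
    simp_rw [exp_transpose]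
    exact T.hasFDerivAt.comp S (hexp S)
  exact DFunLike.congr_fun (h₁.unique h₂) H

theorem trace_fderiv_exp_apply_mul_comm (S H B : Matrix m m 𝕂) :
    trace (fderiv 𝕂 exp S H * B) = trace (fderiv 𝕂 exp S B * H) :=
  tracial_fderiv_exp_apply_mul_comm (LinearMap.toContinuousLinearMap (traceLinearMap m 𝕂 𝕂))
    trace_mul_comm S H B

end Matrix

/-- With respect to the Frobenius inner product `⟨X, Y⟩ = trace (Xᵀ * Y)`, the adjoint of
the Fréchet derivative of the matrix exponential at `S` is its Fréchet derivative
at `Sᵀ`. -/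
theorem fderiv_matrix_exp_adjoint (n : ℕ) (S : Matrix (Fin n) (Fin n) ℝ) :
    ∀ H K : Matrix (Fin n) (Fin n) ℝ,
      ((fderiv ℝ (exp : Matrix (Fin n) (Fin n) ℝ → Matrix (Fin n) (Fin n) ℝ) S H)ᵀ * K).trace
        = (Hᵀ *
            (fderiv ℝ (exp : Matrix (Fin n) (Fin n) ℝ → Matrix (Fin n) (Fin n) ℝ) Sᵀ K)).trace := by
  intro H K
  calc ((fderiv ℝ exp S H)ᵀ * K).trace = (fderiv ℝ exp S H * Kᵀ).trace := by
        rw [← trace_transpose_mul, transpose_transpose]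
    _ = (fderiv ℝ exp S Kᵀ * H).trace := trace_fderiv_exp_apply_mul_comm S H Kᵀ
    _ = (Hᵀ * (fderiv ℝ exp S Kᵀ)ᵀ).trace := by rw [trace_transpose_mul, trace_mul_comm]
    _ = (Hᵀ * fderiv ℝ exp Sᵀ K).trace := by rw [← fderiv_exp_transpose_apply, transpose_transpose]
end
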